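/- arXiv:2304.09963 — 2 statements merged into one kernel-verified Lean document; each statement's English description precedes it below -/
import Mathlib

section
/- Let k be an algebraically closed field, and let f, g ∈ k[x, y, z] be homogeneous polynomials of degrees e₁ ≥ 1 and e₂ ≥ 1 respectively, with f irreducible. If the set of points of ℙ² over k at which both f and g vanish has at least e₁·e₂ + 1 elements, then every point of ℙ² at which f vanishes is also a point at which g vanishes (equivalently, f divides g in k[x, y, z]). -/
/-! If `f ∤ g`, count dimensions in degree `d = e₁ + e₂ + N`, where `N = #T` and the space `H m`
of forms of degree `m` has dimension `h m = (m + 2).choose 2`. As `f` is prime,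
`f • H (d - e₁) ∩ g • H (d - e₂) ⊆ f g • H N`, so `f • H (d - e₁) + g • H (d - e₂)` has dimension
at least `h (d - e₁) + h (d - e₂) - h N = h d - e₁ e₂`. These forms vanish on `T`, and evaluation
`H d → k^T` is onto (use products of linear forms separating the points), so that dimension is at
most `h d - N`. Hence `N ≤ e₁ e₂`. -/

/-- A homogeneous polynomial `f ∈ k[x,y,z]` vanishes at a point `P` of the projective
plane `ℙ²` over `k` if it vanishes at a (equivalently, for homogeneous `f`, any) nonzero
representative vector of `P`. -/
def VanishesAt {k : Type} [Field k]
    (f : MvPolynomial (Fin 3) k) (P : Projectivization k (Fin 3 → k)) : Prop :=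
  MvPolynomial.eval P.rep f = 0

open MvPolynomial Module
open scoped LinearAlgebra.Projectivization

theorem Nat.multichoose_three_add_add (a b t : ℕ) :
    multichoose 3 (a + (b + t)) + multichoose 3 t
      = multichoose 3 (b + t) + multichoose 3 (a + t) + a * b := by
  have h : ∀ m, (multichoose 3 m : ℚ) = (m + 2) * (m + 1) / 2 := fun m => by
    rw [multichoose_eq, show 3 + m - 1 = m + 2 by omega, choose_symm_add, Nat.cast_choose_two]
    push_cast; ring
  exact_mod_cast (by simp only [Nat.cast_add, Nat.cast_mul, h]; ring :
    ((multichoose 3 (a + (b + t)) + multichoose 3 t : ℕ) : ℚ)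
      = (multichoose 3 (b + t) + multichoose 3 (a + t) + a * b : ℕ))

theorem Submodule.finrank_add_finrank_le_of_le_ker {K V U : Type*} [Field K] [AddCommGroup V]
    [Module K V] [AddCommGroup U] [Module K U] {S W : Submodule K V} [FiniteDimensional K W]
    (ψ : V →ₗ[K] U) (hSW : S ≤ W) (hSψ : S ≤ LinearMap.ker ψ) (hW : W.map ψ = ⊤) :
    finrank K S + finrank K U ≤ finrank K W := by
  have hrange : LinearMap.range (ψ.domRestrict W) = ⊤ := by
    rw [LinearMap.range_domRestrict, hW]
  have hS : finrank K S ≤ finrank K (LinearMap.ker (ψ.domRestrict W)) := by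
    rw [← Submodule.finrank_map_subtype_eq]
    exact Submodule.finrank_mono fun x hx => ⟨⟨x, hSW hx⟩, hSψ hx, rfl⟩
  have := (ψ.domRestrict W).finrank_range_add_finrank_ker
  rw [hrange, finrank_top] at this
  omega

theorem finrank_map_mulLeft {K A : Type*} [Field K] [CommRing A] [IsDomain A] [Algebra K A]
    {a : A} (ha : a ≠ 0) (S : Submodule K A) :
    finrank K (S.map (LinearMap.mulLeft K a)) = finrank K S :=
  (Submodule.equivMapOfInjective _ (mul_right_injective₀ ha) S).finrank_eq.symm

namespace MvPolynomial

section Homogeneous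

variable {σ R : Type*} [CommRing R]

instance [Finite σ] (n : ℕ) : Module.Finite R (homogeneousSubmodule σ R n) :=
  Module.Finite.iff_fg.mpr (homogeneousSubmodule_fg σ R n)

theorem finrank_homogeneousSubmodule [Fintype σ] [DecidableEq σ] (K : Type*) [Field K] (n : ℕ) :
    finrank K (homogeneousSubmodule σ K n) = (Fintype.card σ).multichoose n := by
  rw [homogeneousSubmodule_eq_finsupp_supported, ← Sym.card_sym_eq_multichoose,
    ← Nat.card_eq_fintype_card]
  exact (finrank_eq_nat_card_basis (basisRestrictSupport K _)).trans
    (Nat.card_congr (Sym.equivNatSum σ n).symm)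

attribute [local instance] MvPolynomial.gradedAlgebra in
theorem IsHomogeneous.homogeneousComponent_mul {f : MvPolynomial σ R} {e : ℕ}
    (hf : f.IsHomogeneous e) (c : MvPolynomial σ R) (n : ℕ) :
    homogeneousComponent (e + n) (f * c) = f * homogeneousComponent n c := by
  have := DirectSum.coe_decompose_mul_of_left_mem_of_le (homogeneousSubmodule σ R) (b := c) hf
    (Nat.le_add_right e n)
  simpa only [Nat.add_sub_cancel_left, ← DirectSum.Decomposition.decompose'_eq,
    decomposition.decompose'_apply] using this

theorem IsHomogeneous.exists_isHomogeneous_of_dvd {f b : MvPolynomial σ R} {e n : ℕ}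
    (hf : f.IsHomogeneous e) (hb : b.IsHomogeneous (e + n)) (hfb : f ∣ b) :
    ∃ c : MvPolynomial σ R, c.IsHomogeneous n ∧ b = f * c := by
  obtain ⟨c, rfl⟩ := hfb
  exact ⟨_, homogeneousComponent_isHomogeneous n c,
    by rw [← hf.homogeneousComponent_mul, homogeneousComponent_of_mem hb, if_pos rfl]⟩

theorem IsHomogeneous.map_mulLeft_homogeneousSubmodule_le {f : MvPolynomial σ R} {e : ℕ}
    (hf : f.IsHomogeneous e) (n : ℕ) :
    (homogeneousSubmodule σ R n).map (LinearMap.mulLeft R f)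
      ≤ homogeneousSubmodule σ R (e + n) := by
  rintro _ ⟨a, ha, rfl⟩
  exact hf.mul ha

theorem IsHomogeneous.map_mulLeft_inf_map_mulLeft_le {f g : MvPolynomial σ R} {e : ℕ}
    (hf : f.IsHomogeneous e) (hprime : Prime f) (hfg : ¬f ∣ g)
    (A : Submodule R (MvPolynomial σ R)) (n : ℕ) :
    A.map (LinearMap.mulLeft R f) ⊓ (homogeneousSubmodule σ R (e + n)).map (LinearMap.mulLeft R g)
      ≤ (homogeneousSubmodule σ R n).map (LinearMap.mulLeft R (f * g)) := by
  rintro _ ⟨⟨a, -, rfl⟩, b, hb, hab⟩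
  simp only [LinearMap.mulLeft_apply] at hab ⊢
  have hfb : f ∣ b := (hprime.dvd_or_dvd ⟨a, hab⟩).resolve_left hfg
  obtain ⟨c, hc, rfl⟩ := hf.exists_isHomogeneous_of_dvd hb hfb
  exact ⟨c, hc, by rw [LinearMap.mulLeft_apply, ← hab]; ring⟩

end Homogeneous

section Evaluation

variable {σ K : Type*} [Field K]

noncomputable def evalOn (T : Finset (ℙ K (σ → K))) : MvPolynomial σ K →ₗ[K] T → K :=
  LinearMap.pi fun R => (aeval (R : ℙ K (σ → K)).rep).toLinearMap

@[simp]
theorem evalOn_apply (T : Finset (ℙ K (σ → K))) (p : MvPolynomial σ K) (R : T) :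
    evalOn T p R = eval (R : ℙ K (σ → K)).rep p :=
  rfl

variable [Fintype σ]

theorem exists_isHomogeneous_one_eval_eq_zero_ne_zero {P Q : ℙ K (σ → K)} (hPQ : P ≠ Q) :
    ∃ ℓ : MvPolynomial σ K, ℓ.IsHomogeneous 1 ∧ eval Q.rep ℓ = 0 ∧ eval P.rep ℓ ≠ 0 := by
  classical
  have hP : P.rep ∉ K ∙ Q.rep := fun h => hPQ <| by
    obtain ⟨a, ha⟩ := Submodule.mem_span_singleton.mp h
    rw [← P.mk_rep, ← Q.mk_rep, Projectivization.mk_eq_mk_iff']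
    exact ⟨a, ha⟩
  obtain ⟨φ, hφP, hφQ⟩ := Submodule.exists_le_ker_of_notMem hP
  have heval : ∀ v, eval v (∑ i, C (φ (Pi.single i 1)) * X i) = φ v := fun v => by
    conv_rhs => rw [← (Pi.basisFun K σ).sum_repr v]
    simp [mul_comm]
  refine ⟨∑ i, C (φ (Pi.single i 1)) * X i,
    IsHomogeneous.sum _ _ _ fun i _ => isHomogeneous_C_mul_X _ i, ?_, ?_⟩
  · rw [heval]; exact hφQ (Submodule.mem_span_singleton_self _)
  · rwa [heval]

theorem exists_isHomogeneous_eval_ne_zero_eval_eq_zero {T : Finset (ℙ K (σ → K))} {d : ℕ}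
    (hd : T.card ≤ d + 1) {Q : ℙ K (σ → K)} (hQ : Q ∈ T) :
    ∃ p : MvPolynomial σ K, p.IsHomogeneous d ∧ eval Q.rep p ≠ 0 ∧
      ∀ R ∈ T, R ≠ Q → eval R.rep p = 0 := by
  classical
  choose! ℓ hℓ using fun R (h : R ≠ Q) => exists_isHomogeneous_one_eval_eq_zero_ne_zero h.symm
  obtain ⟨i, hi⟩ := Function.ne_iff.mp Q.rep_nonzero
  have hdeg : (T.erase Q).card + (d + 1 - T.card) = d := by
    have := Finset.card_pos.mpr ⟨Q, hQ⟩
    rw [Finset.card_erase_of_mem hQ]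
    omega
  -- the power of a coordinate not vanishing at `Q` pads the product up to degree `d`
  refine ⟨(∏ R ∈ T.erase Q, ℓ R) * X i ^ (d + 1 - T.card), ?_, ?_, ?_⟩
  · have := (IsHomogeneous.prod (T.erase Q) _ (fun _ => 1)
      fun R hR => (hℓ R (Finset.ne_of_mem_erase hR)).1).mul
        (isHomogeneous_X_pow i (d + 1 - T.card))
    simpa [hdeg] using this
  · simp only [map_mul, map_prod, map_pow, eval_X]
    exact mul_ne_zero
      (Finset.prod_ne_zero_iff.mpr fun R hR => (hℓ R (Finset.ne_of_mem_erase hR)).2.2)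
      (pow_ne_zero _ hi)
  · intro R hR hRQ
    rw [map_mul, map_prod, Finset.prod_eq_zero (Finset.mem_erase.mpr ⟨hRQ, hR⟩) (hℓ R hRQ).2.1,
      zero_mul]

theorem map_evalOn_homogeneousSubmodule_eq_top {T : Finset (ℙ K (σ → K))} {d : ℕ}
    (hd : T.card ≤ d + 1) : (homogeneousSubmodule σ K d).map (evalOn T) = ⊤ := by
  classical
  rw [eq_top_iff, ← (Pi.basisFun K T).span_eq, Submodule.span_le]
  rintro _ ⟨Q, rfl⟩
  obtain ⟨p, hp, hQ, hR⟩ := exists_isHomogeneous_eval_ne_zero_eval_eq_zero hd Q.2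
  refine ⟨C (eval Q.1.rep p)⁻¹ * p, hp.C_mul _, ?_⟩
  ext R
  by_cases h : R = Q
  · subst h; simp [hQ]
  · simp [hR R R.2 (Subtype.coe_ne_coe.mpr h), h]

theorem finrank_sup_add_card_le {f g : MvPolynomial σ K} {e₁ e₂ n : ℕ}
    (hf : f.IsHomogeneous e₁) (hg : g.IsHomogeneous e₂) {T : Finset (ℙ K (σ → K))}
    (hT : ∀ P ∈ T, eval P.rep f = 0 ∧ eval P.rep g = 0) (hn : T.card ≤ e₁ + (e₂ + n) + 1) :
    finrank K ↥((homogeneousSubmodule σ K (e₂ + n)).map (LinearMap.mulLeft K f) ⊔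
        (homogeneousSubmodule σ K (e₁ + n)).map (LinearMap.mulLeft K g)) + T.card
      ≤ finrank K (homogeneousSubmodule σ K (e₁ + (e₂ + n))) := by
  have hg' : (homogeneousSubmodule σ K (e₁ + n)).map (LinearMap.mulLeft K g)
      ≤ homogeneousSubmodule σ K (e₁ + (e₂ + n)) := by
    rw [add_left_comm]; exact hg.map_mulLeft_homogeneousSubmodule_le _
  have hker : (homogeneousSubmodule σ K (e₂ + n)).map (LinearMap.mulLeft K f) ⊔
      (homogeneousSubmodule σ K (e₁ + n)).map (LinearMap.mulLeft K g)
        ≤ LinearMap.ker (evalOn T) := by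
    refine sup_le ?_ ?_ <;> rintro _ ⟨a, -, rfl⟩ <;> ext R
    · simp [(hT R R.2).1]
    · simp [(hT R R.2).2]
  have := Submodule.finrank_add_finrank_le_of_le_ker (evalOn T)
    (sup_le (hf.map_mulLeft_homogeneousSubmodule_le _) hg') hker
    (map_evalOn_homogeneousSubmodule_eq_top hn)
  rwa [finrank_fintype_fun_eq_card, Fintype.card_coe] at this

end Evaluation

end MvPolynomial

theorem VanishesAt.of_dvd {k : Type} [Field k] {f g : MvPolynomial (Fin 3) k}
    {P : ℙ k (Fin 3 → k)} (hfg : f ∣ g) (hf : VanishesAt f P) : VanishesAt g P := by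
  obtain ⟨c, rfl⟩ := hfg
  rw [VanishesAt, map_mul, hf, zero_mul]

theorem card_le_mul_of_not_dvd {k : Type} [Field k] {f g : MvPolynomial (Fin 3) k} {e₁ e₂ : ℕ}
    (hf : f.IsHomogeneous e₁) (hg : g.IsHomogeneous e₂) (hprime : Prime f) (hfg : ¬f ∣ g)
    {T : Finset (ℙ k (Fin 3 → k))} (hT : ∀ P ∈ T, VanishesAt f P ∧ VanishesAt g P) :
    T.card ≤ e₁ * e₂ := by
  have hsup := finrank_sup_add_card_le (n := T.card) hf hg hT (by omega)
  have hX := finrank_map_mulLeft hprime.ne_zero (homogeneousSubmodule (Fin 3) k (e₂ + T.card))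
  have hY := finrank_map_mulLeft (show g ≠ 0 by rintro rfl; exact hfg (dvd_zero f))
    (homogeneousSubmodule (Fin 3) k (e₁ + T.card))
  set X := (homogeneousSubmodule (Fin 3) k (e₂ + T.card)).map (LinearMap.mulLeft k f)
  set Y := (homogeneousSubmodule (Fin 3) k (e₁ + T.card)).map (LinearMap.mulLeft k g)
  have hinf : finrank k ↥(X ⊓ Y) ≤ finrank k (homogeneousSubmodule (Fin 3) k T.card) :=
    (Submodule.finrank_mono (hf.map_mulLeft_inf_map_mulLeft_le hprime hfg _ _)).trans
      (Submodule.finrank_map_le _ _)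
  have hsum := Submodule.finrank_sup_add_finrank_inf_eq X Y
  have := Nat.multichoose_three_add_add e₁ e₂ T.card
  simp only [finrank_homogeneousSubmodule, Fintype.card_fin] at hsup hinf hX hY
  omega

theorem stmt3_general (k : Type) [Field k] (e₁ e₂ : ℕ)
    (f g : MvPolynomial (Fin 3) k)
    (hf : f.IsHomogeneous e₁) (hg : g.IsHomogeneous e₂)
    (hirr : Irreducible f)
    (hcard : ∃ T : Finset (Projectivization k (Fin 3 → k)),
      (∀ P ∈ T, VanishesAt f P ∧ VanishesAt g P) ∧ e₁ * e₂ + 1 ≤ T.card) :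
    (∀ P : Projectivization k (Fin 3 → k), VanishesAt f P → VanishesAt g P) ∧ f ∣ g := by
  obtain ⟨T, hT, hTcard⟩ := hcard
  have hfg : f ∣ g := by
    by_contra hfg
    have := card_le_mul_of_not_dvd hf hg hirr.prime hfg hT
    omega
  exact ⟨fun P hP => hP.of_dvd hfg, hfg⟩

/-- Let `k` be algebraically closed, `f, g ∈ k[x,y,z]` homogeneous of degrees `e₁, e₂ ≥ 1`
with `f` irreducible. If `f` and `g` have at least `e₁·e₂ + 1` common zeros in `ℙ²`, then
every zero of `f` is a zero of `g`; equivalently, `f` divides `g`. -/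
theorem stmt3 (k : Type) [Field k] [IsAlgClosed k] (e₁ e₂ : ℕ) (he₁ : 1 ≤ e₁) (he₂ : 1 ≤ e₂)
    (f g : MvPolynomial (Fin 3) k)
    (hf : f.IsHomogeneous e₁) (hg : g.IsHomogeneous e₂)
    (hirr : Irreducible f)
    (hcard : ∃ T : Finset (Projectivization k (Fin 3 → k)),
      (∀ P ∈ T, VanishesAt f P ∧ VanishesAt g P) ∧ e₁ * e₂ + 1 ≤ T.card) :
    (∀ P : Projectivization k (Fin 3 → k), VanishesAt f P → VanishesAt g P) ∧ f ∣ g :=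
  stmt3_general k e₁ e₂ f g hf hg hirr hcard
end

section
/- Let k be a field and r ≥ 0 an integer. Let g₁, …, g_ℓ ∈ k[x, y, z] be homogeneous polynomials of degrees f₁, …, f_ℓ ≥ 1, and set f = f₁ + ⋯ + f_ℓ. Let Γ be a finite set of points of ℙ² over k satisfying the Cayley–Bacharach condition CB(r), and suppose every point of Γ lies in the vanishing locus of at least one g_j. Fix an index i with f − fᵢ ≤ r, and let Γᵢ be the set of points P ∈ Γ such that gᵢ vanishes at P and g_j does not vanish at P for every j ≠ i. If Γᵢ is nonempty, then Γᵢ satisfies the Cayley–Bacharach condition CB(r + fᵢ − f), and consequently |Γᵢ| ≥ r + fᵢ − f + 2. -/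
/-- The Cayley–Bacharach condition `CB(r)` for a finite set of points of `ℙ²`. -/
def CayleyBacharach {k : Type} [Field k] (r : ℕ)
    (Γ : Finset (Projectivization k (Fin 3 → k))) : Prop :=
  ∀ P ∈ Γ, ∀ f : MvPolynomial (Fin 3) k, f.IsHomogeneous r →
    (∀ Q ∈ Γ, Q ≠ P → VanishesAt f Q) → VanishesAt f P

open MvPolynomial Projectivization
open scoped LinearAlgebra.Projectivization

variable {k : Type} [Field k]

lemma vanishesAt_mul {F G : MvPolynomial (Fin 3) k} {P : ℙ k (Fin 3 → k)} :
    VanishesAt (F * G) P ↔ VanishesAt F P ∨ VanishesAt G P := by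
  simp only [VanishesAt, map_mul, mul_eq_zero]

lemma vanishesAt_prod {ι : Type*} (s : Finset ι) (g : ι → MvPolynomial (Fin 3) k)
    {P : ℙ k (Fin 3 → k)} : VanishesAt (∏ j ∈ s, g j) P ↔ ∃ j ∈ s, VanishesAt (g j) P := by
  simp only [VanishesAt, map_prod, Finset.prod_eq_zero_iff]

lemma exists_linear_vanishesAt_not_vanishesAt {P Q : ℙ k (Fin 3 → k)} (hQP : Q ≠ P) :
    ∃ L : MvPolynomial (Fin 3) k, L.IsHomogeneous 1 ∧ VanishesAt L Q ∧ ¬ VanishesAt L P := by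
  obtain ⟨m, n, hmn⟩ : ∃ m n, Q.rep m * P.rep n ≠ Q.rep n * P.rep m := by
    by_contra! hminors
    apply hQP
    rw [← mk_rep Q, ← mk_rep P, mk_eq_mk_iff_crossProduct_eq_zero]
    ext a
    fin_cases a <;> simp [cross_apply, hminors]
  refine ⟨C (Q.rep m) * X n - C (Q.rep n) * X m, ?_, ?_, ?_⟩
  · exact ((isHomogeneous_X k n).C_mul _).sub ((isHomogeneous_X k m).C_mul _)
  · simp [VanishesAt, mul_comm]
  · simpa [VanishesAt, sub_eq_zero] using hmn

lemma exists_isHomogeneous_vanishesAt_not_vanishesAt {P : ℙ k (Fin 3 → k)}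
    (E : Finset (ℙ k (Fin 3 → k))) (hPE : P ∉ E) {d : ℕ} (hd : E.card ≤ d) :
    ∃ F : MvPolynomial (Fin 3) k,
      F.IsHomogeneous d ∧ (∀ Q ∈ E, VanishesAt F Q) ∧ ¬ VanishesAt F P := by
  classical
  induction E using Finset.induction_on generalizing d with
  | empty =>
    obtain ⟨m, hm⟩ := Function.ne_iff.1 P.rep_nonzero
    refine ⟨X m ^ d, by simpa using (isHomogeneous_X k m).pow d, by simp, ?_⟩
    simpa [VanishesAt] using pow_ne_zero d hm
  | insert Q E hQE ih =>
    rw [Finset.card_insert_of_notMem hQE] at hd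
    obtain ⟨d, rfl⟩ : ∃ d', d = d' + 1 := ⟨d - 1, by omega⟩
    obtain ⟨F, hF, hFE, hFP⟩ := ih (fun h => hPE (Finset.mem_insert_of_mem h)) (d := d) (by omega)
    have hQP : Q ≠ P := by
      rintro rfl
      exact hPE (Finset.mem_insert_self Q E)
    obtain ⟨L, hL, hLQ, hLP⟩ := exists_linear_vanishesAt_not_vanishesAt hQP
    refine ⟨F * L, hF.mul hL, ?_, by simp [vanishesAt_mul, hFP, hLP]⟩
    simp only [Finset.mem_insert, forall_eq_or_imp, vanishesAt_mul]
    exact ⟨Or.inr hLQ, fun R hR => Or.inl (hFE R hR)⟩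

theorem CayleyBacharach.add_two_le_card {s : ℕ} {Γ : Finset (ℙ k (Fin 3 → k))}
    (hCB : CayleyBacharach s Γ) (hΓ : Γ.Nonempty) : s + 2 ≤ Γ.card := by
  classical
  obtain ⟨P, hP⟩ := hΓ
  by_contra! hcard
  obtain ⟨F, hF, hFΓ, hFP⟩ := exists_isHomogeneous_vanishesAt_not_vanishesAt (Γ.erase P)
    (Γ.notMem_erase P) (d := s) (by rw [Finset.card_erase_of_mem hP]; omega)
  exact hFP (hCB P hP F hF fun Q hQ hQP => hFΓ Q (Finset.mem_erase.2 ⟨hQP, hQ⟩))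

theorem CayleyBacharach.of_forall_vanishesAt {r d : ℕ} {Γ Γ' : Finset (ℙ k (Fin 3 → k))}
    {G : MvPolynomial (Fin 3) k} (hCB : CayleyBacharach r Γ) (hG : G.IsHomogeneous d)
    (hdr : d ≤ r) (hΓ' : Γ' ⊆ Γ) (hvan : ∀ Q ∈ Γ, Q ∉ Γ' → VanishesAt G Q)
    (hnvan : ∀ P ∈ Γ', ¬ VanishesAt G P) : CayleyBacharach (r - d) Γ' := by
  intro P hP h hh hhvan
  have hhG : (h * G).IsHomogeneous r := by simpa [Nat.sub_add_cancel hdr] using hh.mul hG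
  refine (vanishesAt_mul.1 (hCB P (hΓ' hP) (h * G) hhG fun Q hQ hQP => ?_)).resolve_right
    (hnvan P hP)
  by_cases hQ' : Q ∈ Γ'
  · exact vanishesAt_mul.2 (Or.inl (hhvan Q hQ' hQP))
  · exact vanishesAt_mul.2 (Or.inr (hvan Q hQ hQ'))

theorem stmt7_general (k : Type) [Field k] (r ℓ : ℕ)
    (g : Fin ℓ → MvPolynomial (Fin 3) k) (fdeg : Fin ℓ → ℕ)
    (hhom : ∀ j, (g j).IsHomogeneous (fdeg j))
    (f : ℕ) (hf : f = ∑ j, fdeg j)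
    (Γ : Finset (Projectivization k (Fin 3 → k)))
    (hCB : CayleyBacharach r Γ)
    (hcover : ∀ P ∈ Γ, ∃ j, VanishesAt (g j) P)
    (i : Fin ℓ) (hir : f - fdeg i ≤ r)
    (Γi : Finset (Projectivization k (Fin 3 → k)))
    (hΓi : ∀ P, P ∈ Γi ↔ P ∈ Γ ∧ VanishesAt (g i) P ∧ ∀ j, j ≠ i → ¬ VanishesAt (g j) P)
    (hne : Γi.Nonempty) :
    CayleyBacharach (r + fdeg i - f) Γi ∧ r + fdeg i - f + 2 ≤ Γi.card := by
  have hsum : fdeg i + ∑ j ∈ Finset.univ.erase i, fdeg j = f := by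
    rw [hf, Finset.add_sum_erase _ _ (Finset.mem_univ i)]
  have hG : (∏ j ∈ Finset.univ.erase i, g j).IsHomogeneous (f - fdeg i) := by
    rw [← hsum, Nat.add_sub_cancel_left]
    exact IsHomogeneous.prod _ _ _ fun j _ => hhom j
  have hvan : ∀ Q ∈ Γ, Q ∉ Γi → VanishesAt (∏ j ∈ Finset.univ.erase i, g j) Q := by
    intro Q hQ hQi
    rw [vanishesAt_prod]
    by_contra! hother
    have hoff : ∀ j, j ≠ i → ¬ VanishesAt (g j) Q := fun j hji =>
      hother j (Finset.mem_erase.2 ⟨hji, Finset.mem_univ j⟩)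
    obtain ⟨j, hj⟩ := hcover Q hQ
    obtain rfl : j = i := by_contra fun hji => hoff j hji hj
    exact hQi ((hΓi Q).2 ⟨hQ, hj, hoff⟩)
  have hnvan : ∀ P ∈ Γi, ¬ VanishesAt (∏ j ∈ Finset.univ.erase i, g j) P := by
    intro P hP
    rw [vanishesAt_prod]
    rintro ⟨j, hj, hjP⟩
    exact ((hΓi P).1 hP).2.2 j (Finset.ne_of_mem_erase hj) hjP
  have hCBi := hCB.of_forall_vanishesAt hG hir (fun P hP => ((hΓi P).1 hP).1) hvan hnvan
  rw [show r + fdeg i - f = r - (f - fdeg i) by omega]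
  exact ⟨hCBi, hCBi.add_two_le_card hne⟩

/-- Let `g₁, …, g_ℓ ∈ k[x,y,z]` be homogeneous of degrees `f₁, …, f_ℓ ≥ 1`, `f = ∑ fⱼ`.
Let `Γ ⊆ ℙ²` satisfy `CB(r)`, with every point of `Γ` on the vanishing locus of some `gⱼ`.
Fix `i` with `f - fᵢ ≤ r` and let `Γᵢ` be the points of `Γ` on the vanishing locus of `gᵢ`
and of no other `gⱼ`. If `Γᵢ ≠ ∅` then `Γᵢ` satisfies `CB(r + fᵢ - f)` and
`|Γᵢ| ≥ r + fᵢ - f + 2`. -/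
theorem stmt7 (k : Type) [Field k] (r ℓ : ℕ)
    (g : Fin ℓ → MvPolynomial (Fin 3) k) (fdeg : Fin ℓ → ℕ)
    (hdeg : ∀ j, 1 ≤ fdeg j) (hhom : ∀ j, (g j).IsHomogeneous (fdeg j))
    (f : ℕ) (hf : f = ∑ j, fdeg j)
    (Γ : Finset (Projectivization k (Fin 3 → k)))
    (hCB : CayleyBacharach r Γ)
    (hcover : ∀ P ∈ Γ, ∃ j, VanishesAt (g j) P)
    (i : Fin ℓ) (hir : f - fdeg i ≤ r)
    (Γi : Finset (Projectivization k (Fin 3 → k)))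
    (hΓi : ∀ P, P ∈ Γi ↔ P ∈ Γ ∧ VanishesAt (g i) P ∧ ∀ j, j ≠ i → ¬ VanishesAt (g j) P)
    (hne : Γi.Nonempty) :
    CayleyBacharach (r + fdeg i - f) Γi ∧ r + fdeg i - f + 2 ≤ Γi.card :=
  stmt7_general k r ℓ g fdeg hhom f hf Γ hCB hcover i hir Γi hΓi hne
end
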